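/- arXiv:2409.12342 — 3 statements merged into one kernel-verified Lean document; each statement's English description precedes it below -/
import Mathlib

section
/- For every x ∈ X: Ĥ⁺(x) + Ĥ⁻(x) = 0 if and only if there exists a constant C_s ≥ 0 such that h⁺(fⁿ(x)) + h⁻(fⁿ(x)) ≤ C_s for every integer n ∈ ℤ. -/
/-!
Telescoping the quasi-equivariance `|h (g x) - λ h x| ≤ c` along a forward orbit gives
`|h - Ĥ| ≤ c / (λ - 1)`, and `Ĥ (g x) = λ Ĥ x`; so for both directions of a bijection the
canonical heights vanish either on a whole `ℤ`-orbit or nowhere on it. If `Ĥ⁺ x + Ĥ⁻ x = 0`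
then both vanish (they are nonnegative), hence on the whole orbit, where the heights are
bounded by `c / (λ₊ - 1) + c / (λ₋ - 1)`. Conversely, bounded heights divided by `λⁿ` tend
to `0`.
-/

open Filter Topology

section OneSided

variable {X : Type*} {g : X → X} {lam c : ℝ} {h H : X → ℝ}

lemma abs_div_pow_succ_sub_div_pow_le (hl : 1 < lam) (hq : ∀ x, |h (g x) - lam * h x| ≤ c)
    (x : X) (n : ℕ) :
    |h (g^[n + 1] x) / lam ^ (n + 1) - h (g^[n] x) / lam ^ n| ≤ c / lam * lam⁻¹ ^ n := by
  have hpow : 0 < lam ^ (n + 1) := pow_pos (by linarith) _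
  calc |h (g^[n + 1] x) / lam ^ (n + 1) - h (g^[n] x) / lam ^ n|
      = |h (g (g^[n] x)) - lam * h (g^[n] x)| / lam ^ (n + 1) := by
        rw [Function.iterate_succ_apply', ← abs_of_pos hpow, ← abs_div, abs_of_pos hpow]
        congr 1
        field_simp
        ring
    _ ≤ c / lam ^ (n + 1) := by gcongr; exact hq _
    _ = c / lam * lam⁻¹ ^ n := by rw [inv_pow, pow_succ]; field_simp

lemma abs_sub_le_of_tendsto_div_pow (hl : 1 < lam) (hq : ∀ x, |h (g x) - lam * h x| ≤ c)
    (x : X) (hH : Tendsto (fun n : ℕ => h (g^[n] x) / lam ^ n) atTop (𝓝 (H x))) :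
    |h x - H x| ≤ c / (lam - 1) := by
  have hr : lam⁻¹ < 1 := inv_lt_one_of_one_lt₀ hl
  have := dist_le_of_le_geometric_of_tendsto₀ (lam⁻¹) (c / lam) hr
    (fun n => by
      rw [Real.dist_eq, abs_sub_comm]
      exact abs_div_pow_succ_sub_div_pow_le hl hq x n) hH
  rw [Real.dist_eq] at this
  convert this using 1
  · simp
  · have : lam ≠ 0 := by linarith
    field_simp

lemma le_of_tendsto_div_pow_eq_zero (hl : 1 < lam) (hq : ∀ x, |h (g x) - lam * h x| ≤ c)
    (x : X) (hH : Tendsto (fun n : ℕ => h (g^[n] x) / lam ^ n) atTop (𝓝 (H x)))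
    (hx : H x = 0) :
    h x ≤ c / (lam - 1) := by
  have := abs_sub_le_of_tendsto_div_pow hl hq x hH
  rw [hx, sub_zero] at this
  exact (le_abs_self _).trans this

lemma nonneg_of_tendsto_div_pow (hl : 1 < lam) (h0 : ∀ x, 0 ≤ h x) (x : X)
    (hH : Tendsto (fun n : ℕ => h (g^[n] x) / lam ^ n) atTop (𝓝 (H x))) : 0 ≤ H x :=
  ge_of_tendsto' hH fun n => div_nonneg (h0 _) (pow_pos (by linarith) n).le

lemma apply_eq_mul_of_tendsto_div_pow (hl : 1 < lam)
    (hH : ∀ x, Tendsto (fun n : ℕ => h (g^[n] x) / lam ^ n) atTop (𝓝 (H x))) (x : X) :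
    H (g x) = lam * H x := by
  have hshift : Tendsto (fun n : ℕ => lam * (h (g^[n + 1] x) / lam ^ (n + 1))) atTop
      (𝓝 (lam * H x)) := ((hH x).comp (tendsto_add_atTop_nat 1)).const_mul lam
  have hl0 : lam ≠ 0 := by linarith
  refine tendsto_nhds_unique (hH (g x)) (hshift.congr fun n => ?_)
  rw [Function.iterate_succ_apply, pow_succ]
  field_simp

lemma eq_zero_of_tendsto_div_pow_of_bounded (hl : 1 < lam) (h0 : ∀ x, 0 ≤ h x) (x : X)
    (hH : Tendsto (fun n : ℕ => h (g^[n] x) / lam ^ n) atTop (𝓝 (H x)))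
    {C : ℝ} (hC : ∀ n : ℕ, h (g^[n] x) ≤ C) : H x = 0 := by
  have hlpos : 0 < lam := by linarith
  have hgeom : Tendsto (fun n : ℕ => C * lam⁻¹ ^ n) atTop (𝓝 0) := by
    simpa using (tendsto_pow_atTop_nhds_zero_of_lt_one (by positivity)
      (inv_lt_one_of_one_lt₀ hl)).const_mul C
  refine tendsto_nhds_unique hH (tendsto_of_tendsto_of_tendsto_of_le_of_le tendsto_const_nhds
    hgeom (fun n => div_nonneg (h0 _) (pow_pos hlpos n).le) fun n => ?_)
  rw [div_eq_mul_inv, ← inv_pow]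
  gcongr
  exact hC n

end OneSided

lemma Equiv.Perm.apply_zpow_apply_eq_zpow_mul {X K : Type*} [Field K] {f : Equiv.Perm X}
    {H : X → K} {a : K} (ha : a ≠ 0) (hH : ∀ x, H (f x) = a * H x) (x : X) (n : ℤ) :
    H ((f ^ n) x) = a ^ n * H x := by
  induction n using Int.induction_on with
  | zero => simp
  | succ n ih =>
    rw [add_comm, zpow_add, zpow_one, Perm.mul_apply, hH, ih, zpow_one_add₀ ha, mul_assoc]
  | pred n ih =>
    refine mul_left_cancel₀ ha ?_
    rw [← hH, ← Perm.mul_apply, ← zpow_one_add, add_sub_cancel, ih, zpow_sub_one₀ ha]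
    field_simp

/-- A marked point is stable (its two-sided canonical height vanishes) iff its
orbit heights are uniformly bounded over all `n ∈ ℤ`. -/
theorem stable_iff_bounded_orbit_heights
    {X : Type*} (f : Equiv.Perm X) (lp lm c : ℝ)
    (hlp : 1 < lp) (hlm : 1 < lm) (hc : 0 ≤ c)
    (hp hm : X → ℝ)
    (hp0 : ∀ x : X, 0 ≤ hp x) (hm0 : ∀ x : X, 0 ≤ hm x)
    (hpq : ∀ x : X, |hp (f x) - lp * hp x| ≤ c)
    (hmq : ∀ x : X, |hm (f.symm x) - lm * hm x| ≤ c)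
    (Hp Hm : X → ℝ)
    (hHp : ∀ x : X,
      Filter.Tendsto (fun n : ℕ => hp ((f ^ (n : ℤ)) x) / lp ^ n) Filter.atTop (nhds (Hp x)))
    (hHm : ∀ x : X,
      Filter.Tendsto (fun n : ℕ => hm ((f ^ (-(n : ℤ))) x) / lm ^ n) Filter.atTop (nhds (Hm x))) :
    ∀ x : X, (Hp x + Hm x = 0 ↔
      ∃ Cs : ℝ, 0 ≤ Cs ∧ ∀ n : ℤ, hp ((f ^ n) x) + hm ((f ^ n) x) ≤ Cs) := by
  have hfwd (n : ℕ) (x : X) : (f ^ (n : ℤ)) x = f^[n] x := by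
    rw [zpow_natCast, Equiv.Perm.coe_pow]
  have hbwd (n : ℕ) (x : X) : (f ^ (-(n : ℤ))) x = f.symm^[n] x := by
    rw [zpow_neg, zpow_natCast, ← inv_pow, Equiv.Perm.coe_pow]
    rfl
  simp only [hfwd, hbwd] at hHp hHm
  have hHp_orbit (x : X) (n : ℤ) : Hp ((f ^ n) x) = lp ^ n * Hp x :=
    Equiv.Perm.apply_zpow_apply_eq_zpow_mul (by positivity)
      (apply_eq_mul_of_tendsto_div_pow hlp hHp) x n
  have hHm_orbit (x : X) (n : ℤ) : Hm ((f ^ n) x) = lm ^ (-n) * Hm x := by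
    simpa using Equiv.Perm.apply_zpow_apply_eq_zpow_mul (f := f⁻¹) (by positivity)
      (apply_eq_mul_of_tendsto_div_pow hlm hHm) x (-n)
  intro x
  constructor
  · intro hsum
    obtain ⟨hpx, hmx⟩ := (add_eq_zero_iff_of_nonneg
      (nonneg_of_tendsto_div_pow hlp hp0 x (hHp x))
      (nonneg_of_tendsto_div_pow hlm hm0 x (hHm x))).mp hsum
    refine ⟨c / (lp - 1) + c / (lm - 1),
      add_nonneg (div_nonneg hc (by linarith)) (div_nonneg hc (by linarith)),
      fun n => add_le_add ?_ ?_⟩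
    · exact le_of_tendsto_div_pow_eq_zero hlp hpq _ (hHp _) (by rw [hHp_orbit, hpx, mul_zero])
    · exact le_of_tendsto_div_pow_eq_zero hlm hmq _ (hHm _) (by rw [hHm_orbit, hmx, mul_zero])
  · rintro ⟨Cs, -, hCs⟩
    have hpx : Hp x = 0 :=
      eq_zero_of_tendsto_div_pow_of_bounded hlp hp0 x (hHp x) (C := Cs) fun n => by
        linarith [hfwd n x ▸ hCs n, hm0 (f^[n] x)]
    have hmx : Hm x = 0 :=
      eq_zero_of_tendsto_div_pow_of_bounded hlm hm0 x (hHm x) (C := Cs) fun n => by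
        linarith [hbwd n x ▸ hCs (-n), hp0 (f.symm^[n] x)]
    rw [hpx, hmx, add_zero]
end

section
/- For every x ∈ X and every integer n ∈ ℤ, one has h⁺(fⁿ(x)) + h⁻(fⁿ(x)) ≤ λ₊ⁿ·Ĥ⁺(x) + λ₋⁻ⁿ·Ĥ⁻(x) + c/(λ₊−1) + c/(λ₋−1). -/
/-!
Iterating `h (g x) ≥ l h x - c` gives `h x ≤ h (gⁿ x) / lⁿ + c (l⁻¹ + ⋯ + l⁻ⁿ)`, and letting `n → ∞`
yields `h ≤ H + c / (l - 1)` for the canonical height `H = lim h ∘ gⁿ / lⁿ`. Moreover `H ∘ g = l H`,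
so along a two-sided orbit of a bijection `H` scales by `lⁿ`. Applying both facts to `(f, h⁺)` and
`(f⁻¹, h⁻)` at the point `fⁿ x` gives the inequality.
-/

open Filter Topology

namespace Equiv.Perm

variable {X : Type*} (f : Perm X)

lemma zpow_natCast_apply (n : ℕ) (x : X) : (f ^ (n : ℤ)) x = f^[n] x := by
  rw [zpow_natCast, coe_pow]

lemma zpow_neg_natCast_apply (n : ℕ) (x : X) : (f ^ (-(n : ℤ))) x = f.symm^[n] x := by
  rw [zpow_neg, ← inv_zpow, zpow_natCast_apply, inv_def]

end Equiv.Perm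

section CanonicalHeight

variable {X : Type*} {l c : ℝ} {h H : X → ℝ}

lemma le_div_pow_iterate_add_of_le_apply {g : X → X} (hl : 1 < l)
    (hq : ∀ x, l * h x - c ≤ h (g x)) (x : X) (n : ℕ) :
    h x ≤ h (g^[n] x) / l ^ n + c / (l - 1) * (1 - l⁻¹ ^ n) := by
  have hl0 : 0 < l := one_pos.trans hl
  induction n with
  | zero => simp
  | succ n ih =>
    have step : h (g^[n] x) / l ^ n ≤ h (g^[n + 1] x) / l ^ (n + 1) + c / l ^ (n + 1) := by
      rw [Function.iterate_succ_apply', ← add_div, div_le_div_iff₀ (by positivity) (by positivity),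
        pow_succ]
      nlinarith [hq (g^[n] x), pow_pos hl0 n]
    have geom : c / (l - 1) * (1 - l⁻¹ ^ n) + c / l ^ (n + 1)
        = c / (l - 1) * (1 - l⁻¹ ^ (n + 1)) := by
      have : l - 1 ≠ 0 := by linarith
      rw [inv_pow, inv_pow, pow_succ]
      field_simp
      ring
    linarith

lemma le_add_div_sub_one_of_tendsto {g : X → X} (hl : 1 < l)
    (hq : ∀ x, l * h x - c ≤ h (g x)) {x : X}
    (hH : Tendsto (fun n : ℕ => h (g^[n] x) / l ^ n) atTop (𝓝 (H x))) :
    h x ≤ H x + c / (l - 1) := by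
  have hgeom : Tendsto (fun n : ℕ => l⁻¹ ^ n) atTop (𝓝 0) :=
    tendsto_pow_atTop_nhds_zero_of_lt_one (by positivity) (inv_lt_one_of_one_lt₀ hl)
  have hlim : Tendsto (fun n : ℕ => h (g^[n] x) / l ^ n + c / (l - 1) * (1 - l⁻¹ ^ n)) atTop
      (𝓝 (H x + c / (l - 1) * (1 - 0))) :=
    hH.add (tendsto_const_nhds.mul (tendsto_const_nhds.sub hgeom))
  simpa using ge_of_tendsto' hlim (le_div_pow_iterate_add_of_le_apply hl hq x)

lemma apply_eq_mul_of_tendsto {g : X → X} (hl : l ≠ 0)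
    (hH : ∀ x, Tendsto (fun n : ℕ => h (g^[n] x) / l ^ n) atTop (𝓝 (H x))) (x : X) :
    H (g x) = l * H x := by
  have hshift : Tendsto (fun n : ℕ => l * (h (g^[n + 1] x) / l ^ (n + 1))) atTop (𝓝 (l * H x)) :=
    ((hH x).comp (tendsto_add_atTop_nat 1)).const_mul l
  refine tendsto_nhds_unique (hH (g x)) (hshift.congr fun n => ?_)
  rw [Function.iterate_succ_apply, pow_succ]
  field_simp

lemma apply_iterate_eq_pow_mul {g : X → X} (hH : ∀ x, H (g x) = l * H x) (n : ℕ) (x : X) :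
    H (g^[n] x) = l ^ n * H x := by
  induction n with
  | zero => simp
  | succ n ih => rw [Function.iterate_succ_apply', hH, ih, pow_succ]; ring

lemma apply_zpow_eq_zpow_mul {g : Equiv.Perm X} (hl : l ≠ 0) (hH : ∀ x, H (g x) = l * H x)
    (n : ℤ) (x : X) : H ((g ^ n) x) = l ^ n * H x := by
  obtain ⟨k, rfl | rfl⟩ := Int.eq_nat_or_neg n
  · rw [g.zpow_natCast_apply, apply_iterate_eq_pow_mul hH, zpow_natCast]
  · have hback : H x = l ^ k * H ((g ^ (-(k : ℤ))) x) := by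
      rw [← apply_iterate_eq_pow_mul hH, ← g.zpow_natCast_apply, ← Equiv.Perm.mul_apply,
        ← zpow_add, add_neg_cancel, zpow_zero, Equiv.Perm.one_apply]
    rw [hback, ← mul_assoc, zpow_neg l, zpow_natCast, inv_mul_cancel₀ (pow_ne_zero k hl), one_mul]

end CanonicalHeight

theorem orbit_height_inequality_general
    {X : Type*} (f : Equiv.Perm X) (lp lm c : ℝ)
    (hlp : 1 < lp) (hlm : 1 < lm)
    (hp hm : X → ℝ)
    (hpq : ∀ x : X, |hp (f x) - lp * hp x| ≤ c)
    (hmq : ∀ x : X, |hm (f.symm x) - lm * hm x| ≤ c)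
    (Hp Hm : X → ℝ)
    (hHp : ∀ x : X,
      Filter.Tendsto (fun n : ℕ => hp ((f ^ (n : ℤ)) x) / lp ^ n) Filter.atTop (nhds (Hp x)))
    (hHm : ∀ x : X,
      Filter.Tendsto (fun n : ℕ => hm ((f ^ (-(n : ℤ))) x) / lm ^ n) Filter.atTop (nhds (Hm x))) :
    ∀ (x : X) (n : ℤ),
      hp ((f ^ n) x) + hm ((f ^ n) x) ≤
        lp ^ n * Hp x + lm ^ (-n) * Hm x + c / (lp - 1) + c / (lm - 1) := by
  simp only [f.zpow_natCast_apply] at hHp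
  simp only [f.zpow_neg_natCast_apply] at hHm
  have hpq' : ∀ x, lp * hp x - c ≤ hp (f x) := fun x => by linarith [(abs_le.mp (hpq x)).1]
  have hmq' : ∀ x, lm * hm x - c ≤ hm (f.symm x) := fun x => by linarith [(abs_le.mp (hmq x)).1]
  intro x n
  have hp_le := le_add_div_sub_one_of_tendsto hlp hpq' (hHp ((f ^ n) x))
  have hm_le := le_add_div_sub_one_of_tendsto hlm hmq' (hHm ((f ^ n) x))
  have hHp_orbit : Hp ((f ^ n) x) = lp ^ n * Hp x :=
    apply_zpow_eq_zpow_mul (by positivity) (apply_eq_mul_of_tendsto (by positivity) hHp) n x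
  have hHm_orbit : Hm ((f ^ n) x) = lm ^ (-n) * Hm x := by
    rw [show f ^ n = f⁻¹ ^ (-n) by rw [inv_zpow', neg_neg]]
    exact apply_zpow_eq_zpow_mul (by positivity) (apply_eq_mul_of_tendsto (by positivity) hHm) _ x
  linarith

/-- Orbit-height inequality from the proof of the weak Northcott property. -/
theorem orbit_height_inequality
    {X : Type*} (f : Equiv.Perm X) (lp lm c : ℝ)
    (hlp : 1 < lp) (hlm : 1 < lm) (hc : 0 ≤ c)
    (hp hm : X → ℝ)
    (hp0 : ∀ x : X, 0 ≤ hp x) (hm0 : ∀ x : X, 0 ≤ hm x)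
    (hpq : ∀ x : X, |hp (f x) - lp * hp x| ≤ c)
    (hmq : ∀ x : X, |hm (f.symm x) - lm * hm x| ≤ c)
    (Hp Hm : X → ℝ)
    (hHp : ∀ x : X,
      Filter.Tendsto (fun n : ℕ => hp ((f ^ (n : ℤ)) x) / lp ^ n) Filter.atTop (nhds (Hp x)))
    (hHm : ∀ x : X,
      Filter.Tendsto (fun n : ℕ => hm ((f ^ (-(n : ℤ))) x) / lm ^ n) Filter.atTop (nhds (Hm x))) :
    ∀ (x : X) (n : ℤ),
      hp ((f ^ n) x) + hm ((f ^ n) x) ≤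
        lp ^ n * Hp x + lm ^ (-n) * Hm x + c / (lp - 1) + c / (lm - 1) :=
  orbit_height_inequality_general f lp lm c hlp hlm hp hm hpq hmq Hp Hm hHp hHm
end

section
/- Assume there exists ε > 0 such that for every x ∈ X, if Ĥ⁺(x) + Ĥ⁻(x) < ε then Ĥ⁺(x) + Ĥ⁻(x) = 0. Then for every x ∈ X: Ĥ⁺(x) = 0 if and only if Ĥ⁻(x) = 0, and either is equivalent to Ĥ⁺(x) + Ĥ⁻(x) = 0. -/
/-!
Taking the limit along a shifted orbit gives the functional equations `Ĥ⁺ ∘ f = λ₊ Ĥ⁺` and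
`Ĥ⁻ ∘ f⁻¹ = λ₋ Ĥ⁻`. If `Ĥ⁺(x) = 0`, then along the forward orbit `Ĥ⁺` stays `0` while
`Ĥ⁻(fⁿ x) = Ĥ⁻(x) / λ₋ⁿ` tends to `0`; once the total height drops below the gap `ε` it must
vanish, and scaling back gives `Ĥ⁻(x) = 0`. The converse runs the same argument along `f⁻¹`.
-/

open Filter Topology

section IteratedHeights

variable {X : Type*} {g : X → X} {l : ℝ}

theorem apply_eq_mul_of_tendsto_iterate_div_pow {u H : X → ℝ} (hl : l ≠ 0)
    (hH : ∀ x, Tendsto (fun n : ℕ => u (g^[n] x) / l ^ n) atTop (𝓝 (H x))) (x : X) :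
    H (g x) = l * H x := by
  have hshift : Tendsto (fun n : ℕ => l * (u (g^[n + 1] x) / l ^ (n + 1))) atTop
      (𝓝 (l * H x)) :=
    ((tendsto_add_atTop_iff_nat 1).2 (hH x)).const_mul l
  have hseq : (fun n : ℕ => u (g^[n] (g x)) / l ^ n) =
      fun n : ℕ => l * (u (g^[n + 1] x) / l ^ (n + 1)) := by
    funext n
    rw [Function.iterate_succ_apply]
    field_simp
    ring
  exact tendsto_nhds_unique (hseq ▸ hH (g x)) hshift

theorem pow_mul_apply_iterate {M : X → ℝ} (h : ∀ x, l * M (g x) = M x) (n : ℕ) (x : X) :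
    l ^ n * M (g^[n] x) = M x := by
  induction n generalizing x with
  | zero => simp
  | succ n ih => rw [Function.iterate_succ_apply, pow_succ', mul_assoc, ih, h]

theorem eq_zero_of_gap {P M : X → ℝ} {ε : ℝ} (hl : 1 < l)
    (hP : Set.MapsTo g {x | P x = 0} {x | P x = 0}) (hM : ∀ x, l * M (g x) = M x)
    (hε : 0 < ε) (hgap : ∀ x, P x + M x < ε → P x + M x = 0) {x : X} (hx : P x = 0) :
    M x = 0 := by
  have horbit (n : ℕ) : M (g^[n] x) = M x / l ^ n := by
    rw [← pow_mul_apply_iterate hM n x, mul_div_cancel_left₀ _ (by positivity)]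
  have hlim : Tendsto (fun n : ℕ => M (g^[n] x)) atTop (𝓝 0) := by
    simpa only [horbit] using
      tendsto_const_nhds.div_atTop (tendsto_pow_atTop_atTop_of_one_lt hl)
  obtain ⟨n, hn⟩ := (hlim.eventually_lt_const hε).exists
  have hPn : P (g^[n] x) = 0 := hP.iterate n hx
  have hMn : M (g^[n] x) = 0 := by
    have := hgap _ (by rwa [hPn, zero_add])
    rwa [hPn, zero_add] at this
  rw [← pow_mul_apply_iterate hM n x, hMn, mul_zero]

end IteratedHeights

theorem vanishing_heights_equiv_general
    {X : Type*} (f : Equiv.Perm X) (lp lm : ℝ)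
    (hlp : 1 < lp) (hlm : 1 < lm)
    (hp hm : X → ℝ)
    (hp0 : ∀ x : X, 0 ≤ hp x) (hm0 : ∀ x : X, 0 ≤ hm x)
    (Hp Hm : X → ℝ)
    (hHp : ∀ x : X,
      Filter.Tendsto (fun n : ℕ => hp ((f ^ (n : ℤ)) x) / lp ^ n) Filter.atTop (nhds (Hp x)))
    (hHm : ∀ x : X,
      Filter.Tendsto (fun n : ℕ => hm ((f ^ (-(n : ℤ))) x) / lm ^ n) Filter.atTop (nhds (Hm x)))
    (hgap : ∃ ε : ℝ, 0 < ε ∧ ∀ x : X, Hp x + Hm x < ε → Hp x + Hm x = 0) :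
    ∀ x : X, (Hp x = 0 ↔ Hm x = 0) ∧ (Hp x = 0 ↔ Hp x + Hm x = 0) := by
  obtain ⟨ε, hε, hgap⟩ := hgap
  simp only [zpow_neg, zpow_natCast, ← inv_pow, Equiv.Perm.inv_def,
    ← Equiv.Perm.iterate_eq_pow] at hHp hHm
  have HpF := apply_eq_mul_of_tendsto_iterate_div_pow (by positivity) hHp
  have HmF := apply_eq_mul_of_tendsto_iterate_div_pow (by positivity) hHm
  have forward {x} : Hp x = 0 → Hm x = 0 :=
    eq_zero_of_gap hlm (fun y (hy : Hp y = 0) => show Hp (f y) = 0 by rw [HpF, hy, mul_zero])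
      (fun y => by simpa using (HmF (f y)).symm) hε hgap
  have backward {x} : Hm x = 0 → Hp x = 0 :=
    eq_zero_of_gap hlp
      (fun y (hy : Hm y = 0) => show Hm (f.symm y) = 0 by rw [HmF, hy, mul_zero])
      (fun y => by simpa using (HpF (f.symm y)).symm) hε
      (fun y => by simpa only [add_comm] using hgap y)
  intro x
  have Hp0 : 0 ≤ Hp x := ge_of_tendsto' (hHp x) fun n => by have := hp0 (f^[n] x); positivity
  have Hm0 : 0 ≤ Hm x := ge_of_tendsto' (hHm x) fun n => by have := hm0 (f.symm^[n] x); positivity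
  refine ⟨⟨forward, backward⟩, fun h => by rw [h, forward h, add_zero], fun h => by linarith⟩

/-- Given the weak Northcott gap property, vanishing of the forward, backward and
total canonical heights are all equivalent. -/
theorem vanishing_heights_equiv
    {X : Type*} (f : Equiv.Perm X) (lp lm c : ℝ)
    (hlp : 1 < lp) (hlm : 1 < lm) (hc : 0 ≤ c)
    (hp hm : X → ℝ)
    (hp0 : ∀ x : X, 0 ≤ hp x) (hm0 : ∀ x : X, 0 ≤ hm x)
    (hpq : ∀ x : X, |hp (f x) - lp * hp x| ≤ c)
    (hmq : ∀ x : X, |hm (f.symm x) - lm * hm x| ≤ c)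
    (Hp Hm : X → ℝ)
    (hHp : ∀ x : X,
      Filter.Tendsto (fun n : ℕ => hp ((f ^ (n : ℤ)) x) / lp ^ n) Filter.atTop (nhds (Hp x)))
    (hHm : ∀ x : X,
      Filter.Tendsto (fun n : ℕ => hm ((f ^ (-(n : ℤ))) x) / lm ^ n) Filter.atTop (nhds (Hm x)))
    (hgap : ∃ ε : ℝ, 0 < ε ∧ ∀ x : X, Hp x + Hm x < ε → Hp x + Hm x = 0) :
    ∀ x : X, (Hp x = 0 ↔ Hm x = 0) ∧ (Hp x = 0 ↔ Hp x + Hm x = 0) :=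
  vanishing_heights_equiv_general f lp lm hlp hlm hp hm hp0 hm0 Hp Hm hHp hHm hgap
end
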